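/- Let G be a weighted graph, let F be a bipartite graph, and let 𝓗 be the class of all graphs that are weighted cross-bipartite swapping in G. Then every 𝓗-blow-up H of F satisfies hom(H, G)² ≤ hom(H × K_2, G). -/

import Mathlib

open SimpleGraph

/-- The tensor product `H × K₂`. -/
def tensorK2 {V : Type} (H : SimpleGraph V) : SimpleGraph (V × Fin 2) where
  Adj x y := H.Adj x.1 y.1 ∧ x.2 ≠ y.2
  symm := ⟨fun _ _ h => ⟨h.1.symm, h.2.symm⟩⟩
  loopless := ⟨fun _ h => h.2 rfl⟩

/-- The weight a symmetric matrix `G` puts on an unordered pair of indices. -/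
noncomputable def edgeWeight {n : ℕ} (G : Matrix (Fin n) (Fin n) ℝ) (hG : G.IsHermitian) :
    Sym2 (Fin n) → ℝ :=
  Sym2.lift ⟨fun i j => G i j, fun i j => by simpa using hG.apply j i⟩

-- The `G`-volume `V_H(x; G) = Σ_φ Π_{uv∈E(H)} G(φu,φv) Π_u x_{u,φ(u)}`.
open scoped Classical in
noncomputable def gvol {V : Type} [Fintype V] {n : ℕ} (H : SimpleGraph V)
    (G : Matrix (Fin n) (Fin n) ℝ) (hG : G.IsHermitian) (x : V → Fin n → ℝ) : ℝ :=
  ∑ φ : V → Fin n, (∏ e ∈ H.edgeFinset, edgeWeight G hG (e.map φ)) * ∏ v : V, x v (φ v)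

/-- A `t`-vertex graph `H` is weighted cross-bipartite swapping in the weighted graph `G`:
for all nonnegative `a, b : [n] → ℝ`,
`V_H(a,…,a;G) ⬝ V_H(b,…,b;G) ≤ V_{H×K₂}(a,…,a,b,…,b;G)`. -/
def WeightedCBS {V : Type} [Fintype V] {n : ℕ} (H : SimpleGraph V)
    (G : Matrix (Fin n) (Fin n) ℝ) (hG : G.IsHermitian) : Prop :=
  ∀ a b : Fin n → ℝ, (∀ ν, 0 ≤ a ν) → (∀ ν, 0 ≤ b ν) →
    gvol H G hG (fun _ => a) * gvol H G hG (fun _ => b) ≤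
      gvol (tensorK2 H) G hG (fun p => if p.2 = 0 then a else b)

/-- `H` is a blow-up of `F` by graphs of the class described by `P`. -/
def IsBlowUpOf {V ι : Type} (H : SimpleGraph V) (F : SimpleGraph ι)
    (P : (α : Type) → SimpleGraph α → Prop) : Prop :=
  ∃ p : V → ι, Function.Surjective p ∧
    (∀ u v : V, p u ≠ p v → (H.Adj u v ↔ F.Adj (p u) (p v))) ∧
    ∀ i : ι, P (p ⁻¹' {i}) (H.induce (p ⁻¹' {i}))

/-!
Let `K_s` (`tensorK2On H p s`) be the graph on `V × Fin 2` that is `H × K₂` on the parts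
`p ⁻¹' {i}`, `i ∈ s`, and two disjoint copies of `H` elsewhere. Then `hom(K_∅, G)` is
`hom(H, G)²`, and once `s` contains every part, flipping the two layers over one colour class
of `F` turns `K_s` into `H × K₂`. Adding a part `i` to `s` does not decrease `hom(K_s, G)`: fix
the images of all vertices outside the part; the edges to the outside put vertex weights `a` on
layer `0` and `b` on layer `1` of the part (they depend only on the layer, since all vertices of
a part have the same neighbours outside it), and the remaining sum is `V_{H_i}(a) V_{H_i}(b)`
for `K_s` and `V_{H_i × K₂}(a, b)` for `K_{s ∪ {i}}`. This is the swapping inequality for `H_i`.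
-/

open Finset
open scoped Classical

section

variable {W : Type} [Fintype W]

theorem Fintype.prod_eq_prod_set_mul_prod_compl {M : Type} [CommMonoid M] (T : Set W)
    (f : W → M) : ∏ w, f w = (∏ t : ↥T, f t) * ∏ r : ↥Tᶜ, f r :=
  (Fintype.prod_equiv (Equiv.Set.sumCompl T) _ f fun _ => rfl).symm.trans
    (Fintype.prod_sum_type _)

theorem Fintype.sum_arrow_prod_fin_two {β R : Type} [Fintype β] [CommSemiring R]
    (f g : (W → β) → R) :
    ∑ ψ : W × Fin 2 → β, f (fun v => ψ (v, 0)) * g (fun v => ψ (v, 1)) =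
      (∑ φ, f φ) * ∑ φ, g φ := by
  rw [sum_mul_sum, ← Fintype.sum_prod_type']
  exact Fintype.sum_equiv ((Equiv.curry _ _ _).trans ((Equiv.piComm _).trans (piFinTwoEquiv _)))
    _ _ fun _ => rfl

end

section

variable {n : ℕ} (G : Matrix (Fin n) (Fin n) ℝ) (hG : G.IsHermitian)

noncomputable def edgeProd {W : Type} [Fintype W] (K : SimpleGraph W) (φ : W → Fin n) : ℝ :=
  ∏ e ∈ K.edgeFinset, edgeWeight G hG (e.map φ)

-- Identities between edge products are proved for their squares `adjProd`, where they are
-- reindexings of products over ordered pairs.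
noncomputable def adjProd {W : Type} [Fintype W] (K : SimpleGraph W) (φ : W → Fin n) : ℝ :=
  ∏ x, ∏ y, if K.Adj x y then G (φ x) (φ y) else 1

noncomputable def boundaryWeight {W : Type} [Fintype W] (K : SimpleGraph W) (T : Set W)
    (ψ : ↥Tᶜ → Fin n) (t : ↥T) (ν : Fin n) : ℝ :=
  ∏ r : ↥Tᶜ, if K.Adj t r then G ν (ψ r) else 1

variable {G} {W : Type} [Fintype W]

theorem gvol_eq_sum_edgeProd (K : SimpleGraph W) (x : W → Fin n → ℝ) :
    gvol K G hG x = ∑ φ, edgeProd G hG K φ * ∏ v, x v (φ v) := rfl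

theorem edgeProd_nonneg (hnn : ∀ i j, 0 ≤ G i j) (K : SimpleGraph W) (φ : W → Fin n) :
    0 ≤ edgeProd G hG K φ :=
  prod_nonneg fun e _ => e.ind fun _ _ => hnn _ _

theorem boundaryWeight_nonneg (hnn : ∀ i j, 0 ≤ G i j) (K : SimpleGraph W) (T : Set W)
    (ψ : ↥Tᶜ → Fin n) (t : ↥T) (ν : Fin n) : 0 ≤ boundaryWeight G K T ψ t ν :=
  prod_nonneg fun _ _ => by split_ifs <;> simp [hnn]

theorem adjProd_eq_prod_dart (K : SimpleGraph W) (φ : W → Fin n) :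
    adjProd G K φ = ∏ d : K.Dart, G (φ d.fst) (φ d.snd) := by
  rw [adjProd, ← Fintype.prod_prod_type'
    (f := fun x y => if K.Adj x y then G (φ x) (φ y) else 1), ← prod_filter]
  refine (prod_nbij Dart.toProd (by simp) (fun d _ d' _ h => Dart.ext _ _ h) ?_
    fun _ _ => rfl).symm
  rintro ⟨x, y⟩ h
  exact ⟨⟨(x, y), (mem_filter.1 h).2⟩, mem_univ _, rfl⟩

theorem edgeProd_sq (K : SimpleGraph W) (φ : W → Fin n) :
    edgeProd G hG K φ ^ 2 = adjProd G K φ := by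
  rw [adjProd_eq_prod_dart, edgeProd, ← prod_pow,
    ← prod_fiberwise_of_maps_to (g := Dart.edge) (t := K.edgeFinset) (by simp)]
  refine prod_congr rfl fun e he => ?_
  rw [prod_congr rfl (g := fun _ => edgeWeight G hG (e.map φ)), prod_const,
    K.dart_edge_fiber_card e (mem_edgeFinset.1 he)]
  rintro d hd
  rw [← (mem_filter.1 hd).2]
  rfl

theorem edgeProd_eq_of_adjProd_eq (hnn : ∀ i j, 0 ≤ G i j) {K : SimpleGraph W}
    {φ : W → Fin n} {r : ℝ} (hr : 0 ≤ r) (h : adjProd G K φ = r ^ 2) : edgeProd G hG K φ = r := by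
  rwa [← edgeProd_sq hG, pow_left_inj₀ (edgeProd_nonneg hG hnn K φ) hr two_ne_zero] at h

theorem edgeProd_iso {W' : Type} [Fintype W'] {K : SimpleGraph W} {K' : SimpleGraph W'}
    (e : K ≃g K') (φ : W' → Fin n) : edgeProd G hG K' φ = edgeProd G hG K (φ ∘ e) := by
  refine (prod_nbij' (Sym2.map e) (Sym2.map e.symm) (fun x hx => ?_) (fun x hx => ?_)
    (fun x _ => ?_) (fun x _ => ?_) (fun x _ => ?_)).symm
  · simpa [e.map_mem_edgeSet_iff] using hx
  · simpa [e.symm.map_mem_edgeSet_iff] using hx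
  · simp [Sym2.map_map]
  · simp [Sym2.map_map]
  · rw [Sym2.map_map]

theorem gvol_iso {W' : Type} [Fintype W'] {K : SimpleGraph W} {K' : SimpleGraph W'}
    (e : K ≃g K') (x : W' → Fin n → ℝ) :
    gvol K' G hG x = gvol K G hG (fun v => x (e v)) := by
  rw [gvol_eq_sum_edgeProd, gvol_eq_sum_edgeProd]
  refine Fintype.sum_equiv (e.toEquiv.arrowCongr (Equiv.refl _)).symm _ _ fun φ => ?_
  rw [edgeProd_iso hG e]
  exact congrArg (_ * ·) (e.toEquiv.prod_comp fun v => x v (φ v)).symm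

theorem adjProd_boxProd_bot (K : SimpleGraph W) (ψ : W × Fin 2 → Fin n) :
    adjProd G (K □ (⊥ : SimpleGraph (Fin 2))) ψ =
      adjProd G K (fun v => ψ (v, 0)) * adjProd G K (fun v => ψ (v, 1)) := by
  simp [adjProd, Fintype.prod_prod_type, Fin.prod_univ_two, prod_mul_distrib]

theorem gvol_boxProd_bot (hnn : ∀ i j, 0 ≤ G i j) (K : SimpleGraph W)
    (x : W × Fin 2 → Fin n → ℝ) :
    gvol (K □ (⊥ : SimpleGraph (Fin 2))) G hG x =
      gvol K G hG (fun v => x (v, 0)) * gvol K G hG (fun v => x (v, 1)) := by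
  have hprod (ψ : W × Fin 2 → Fin n) : edgeProd G hG (K □ ⊥) ψ =
      edgeProd G hG K (fun v => ψ (v, 0)) * edgeProd G hG K (fun v => ψ (v, 1)) :=
    edgeProd_eq_of_adjProd_eq hG hnn
      (mul_nonneg (edgeProd_nonneg hG hnn _ _) (edgeProd_nonneg hG hnn _ _))
      (by rw [adjProd_boxProd_bot, mul_pow, edgeProd_sq hG, edgeProd_sq hG])
  rw [gvol_eq_sum_edgeProd, gvol_eq_sum_edgeProd, gvol_eq_sum_edgeProd,
    ← Fintype.sum_arrow_prod_fin_two]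
  -- the two sums run over `univ` for different classical `Fintype` instances
  refine sum_congr (by congr!) fun ψ _ => ?_
  rw [hprod, Fintype.prod_prod_type]
  simp only [Fin.prod_univ_two, prod_mul_distrib]
  ring

include hG in
theorem adjProd_eq_induce_mul_induce_compl (K : SimpleGraph W) (T : Set W) (ψ : W → Fin n) :
    adjProd G K ψ =
      adjProd G (K.induce T) (fun t => ψ t) * adjProd G (K.induce Tᶜ) (fun r => ψ r) *
        (∏ t : ↥T, boundaryWeight G K T (fun r => ψ r) t (ψ t)) ^ 2 := by
  have hsymm (x y : W) : (if K.Adj y x then G (ψ y) (ψ x) else 1) =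
      if K.Adj x y then G (ψ x) (ψ y) else 1 := by
    rw [K.adj_comm, show G (ψ y) (ψ x) = G (ψ x) (ψ y) by simpa using hG.apply (ψ x) (ψ y)]
  simp only [adjProd, boundaryWeight, induce_adj, Fintype.prod_eq_prod_set_mul_prod_compl T,
    prod_mul_distrib]
  rw [prod_comm (s := (univ : Finset ↥Tᶜ))]
  simp only [hsymm]
  ring

theorem edgeProd_eq_induce_mul_induce_compl (hnn : ∀ i j, 0 ≤ G i j) (K : SimpleGraph W)
    (T : Set W) (ψ : W → Fin n) :
    edgeProd G hG K ψ =
      edgeProd G hG (K.induce T) (fun t => ψ t) * edgeProd G hG (K.induce Tᶜ) (fun r => ψ r) *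
        ∏ t : ↥T, boundaryWeight G K T (fun r => ψ r) t (ψ t) := by
  refine edgeProd_eq_of_adjProd_eq hG hnn (mul_nonneg (mul_nonneg (edgeProd_nonneg hG hnn _ _)
    (edgeProd_nonneg hG hnn _ _)) (prod_nonneg fun _ _ => boundaryWeight_nonneg hnn _ _ _ _ _)) ?_
  rw [mul_pow, mul_pow, edgeProd_sq, edgeProd_sq, adjProd_eq_induce_mul_induce_compl hG]

theorem gvol_eq_sum_induce_compl (hnn : ∀ i j, 0 ≤ G i j) (K : SimpleGraph W) (T : Set W)
    (x : W → Fin n → ℝ) :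
    gvol K G hG x = ∑ ψ : ↥Tᶜ → Fin n,
      edgeProd G hG (K.induce Tᶜ) ψ * (∏ r : ↥Tᶜ, x r (ψ r)) *
        gvol (K.induce T) G hG (fun t ν => x t ν * boundaryWeight G K T ψ t ν) := by
  let split : (W → Fin n) ≃ (↥T → Fin n) × (↥Tᶜ → Fin n) :=
    ((Equiv.Set.sumCompl T).symm.arrowCongr (Equiv.refl _)).trans
      (Equiv.sumArrowEquivProdArrow _ _ _)
  rw [gvol_eq_sum_edgeProd, Fintype.sum_equiv split _ (fun q =>
      edgeProd G hG (K.induce Tᶜ) q.2 * (∏ r : ↥Tᶜ, x r (q.2 r)) *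
        (edgeProd G hG (K.induce T) q.1 *
          ∏ t : ↥T, x t (q.1 t) * boundaryWeight G K T q.2 t (q.1 t))) fun ψ => ?_,
    Fintype.sum_prod_type, sum_comm]
  · refine sum_congr rfl fun ψ _ => ?_
    dsimp only
    rw [← mul_sum, gvol_eq_sum_edgeProd]
    exact congrArg (_ * ·) (sum_congr (by congr!) fun _ _ => rfl)
  · rw [edgeProd_eq_induce_mul_induce_compl hG hnn K T,
      Fintype.prod_eq_prod_set_mul_prod_compl T, prod_mul_distrib]
    have hsplit : split ψ = (fun t : ↥T => ψ t, fun r : ↥Tᶜ => ψ r) := rfl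
    rw [hsplit]
    ring

theorem gvol_le_of_induce_compl_eq (hnn : ∀ i j, 0 ≤ G i j) {K K' : SimpleGraph W} (T : Set W)
    {x : W → Fin n → ℝ} (hx : ∀ w ν, 0 ≤ x w ν) (hout : K.induce Tᶜ = K'.induce Tᶜ)
    (hbdry : ∀ t ∈ T, ∀ r ∉ T, K.Adj t r ↔ K'.Adj t r)
    (hin : ∀ ψ : ↥Tᶜ → Fin n,
      gvol (K.induce T) G hG (fun t ν => x t ν * boundaryWeight G K T ψ t ν) ≤
        gvol (K'.induce T) G hG (fun t ν => x t ν * boundaryWeight G K T ψ t ν)) :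
    gvol K G hG x ≤ gvol K' G hG x := by
  have hweight : boundaryWeight G K' T = boundaryWeight G K T := by
    funext ψ t ν
    exact prod_congr rfl fun r _ => by rw [hbdry t t.2 r r.2]
  rw [gvol_eq_sum_induce_compl hG hnn K T, gvol_eq_sum_induce_compl hG hnn K' T, hout, hweight]
  exact sum_le_sum fun ψ _ => mul_le_mul_of_nonneg_left (hin ψ)
    (mul_nonneg (edgeProd_nonneg hG hnn _ _) (prod_nonneg fun r _ => hx r _))

end

section

variable {V ι : Type}

def tensorK2On (H : SimpleGraph V) (p : V → ι) (s : Finset ι) : SimpleGraph (V × Fin 2) where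
  Adj x y := H.Adj x.1 y.1 ∧ (x.2 ≠ y.2 ↔ p x.1 = p y.1 ∧ p x.1 ∈ s)
  symm := ⟨fun _ _ h => ⟨h.1.symm, ne_comm.trans <| h.2.trans
    ⟨fun ⟨e, m⟩ => ⟨e.symm, e ▸ m⟩, fun ⟨e, m⟩ => ⟨e.symm, e ▸ m⟩⟩⟩⟩
  loopless := ⟨fun x h => H.loopless.irrefl x.1 h.1⟩

variable {H : SimpleGraph V} {p : V → ι}

theorem tensorK2On_empty : tensorK2On H p ∅ = H □ (⊥ : SimpleGraph (Fin 2)) := by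
  ext x y
  simp [tensorK2On, boxProd_adj]

theorem tensorK2On_adj_of_ne {s : Finset ι} {x y : V × Fin 2} (h : p x.1 ≠ p y.1) :
    (tensorK2On H p s).Adj x y ↔ H.Adj x.1 y.1 ∧ x.2 = y.2 := by
  simp [tensorK2On, h]

def tensorK2IsoTensorK2On {F : SimpleGraph ι}
    (hadj : ∀ u v, p u ≠ p v → (H.Adj u v ↔ F.Adj (p u) (p v))) (C : F.Coloring (Fin 2))
    {s : Finset ι} (hs : ∀ v, p v ∈ s) : tensorK2 H ≃g tensorK2On H p s where
  toEquiv := Equiv.prodShear (Equiv.refl V) fun v => Equiv.addRight (C (p v))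
  map_rel_iff' {a b} := by
    simp only [Equiv.prodShear_apply, Equiv.refl_apply, Equiv.coe_addRight]
    by_cases hp : p a.1 = p b.1
    · simp [tensorK2On, tensorK2, hp, hs]
    · simp only [tensorK2On, tensorK2, hp, false_and, iff_false, not_not]
      refine and_congr_right fun hab => ?_
      have hflip : ∀ x y c d : Fin 2, c ≠ d → (x + c = y + d ↔ x ≠ y) := by decide
      exact hflip _ _ _ _ (C.valid ((hadj _ _ hp).1 hab))

def inducePartIsoOfNotMem {s : Finset ι} {i : ι} (hi : i ∉ s) :
    (H.induce (p ⁻¹' {i})).boxProd (⊥ : SimpleGraph (Fin 2)) ≃g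
      (tensorK2On H p s).induce (Prod.fst ⁻¹' (p ⁻¹' {i})) where
  toEquiv := Equiv.prodSubtypeFstEquivSubtypeProd.symm
  map_rel_iff' {a b} := by
    have ha : p a.1 = i := a.1.2
    have hb : p b.1 = i := b.1.2
    change (tensorK2On H p s).Adj (a.1.1, a.2) (b.1.1, b.2) ↔ _
    simp [tensorK2On, boxProd_adj, ha, hb, hi]

def inducePartIsoOfMem {s : Finset ι} {i : ι} (hi : i ∈ s) :
    tensorK2 (H.induce (p ⁻¹' {i})) ≃g
      (tensorK2On H p s).induce (Prod.fst ⁻¹' (p ⁻¹' {i})) where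
  toEquiv := Equiv.prodSubtypeFstEquivSubtypeProd.symm
  map_rel_iff' {a b} := by
    have ha : p a.1 = i := a.1.2
    have hb : p b.1 = i := b.1.2
    change (tensorK2On H p s).Adj (a.1.1, a.2) (b.1.1, b.2) ↔ _
    simp [tensorK2On, tensorK2, ha, hb, hi]

end

theorem gvol_tensorK2On_le_insert {n : ℕ} {G : Matrix (Fin n) (Fin n) ℝ} (hG : G.IsHermitian)
    (hnn : ∀ i j, 0 ≤ G i j) {V ι : Type} [Fintype V] {H : SimpleGraph V}
    {F : SimpleGraph ι} {p : V → ι} (hadj : ∀ u v, p u ≠ p v → (H.Adj u v ↔ F.Adj (p u) (p v)))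
    {s : Finset ι} {i : ι} (hi : i ∉ s) (hcbs : WeightedCBS (H.induce (p ⁻¹' {i})) G hG) :
    gvol (tensorK2On H p s) G hG (fun _ _ => 1) ≤
      gvol (tensorK2On H p (insert i s)) G hG (fun _ _ => 1) := by
  set T : Set (V × Fin 2) := Prod.fst ⁻¹' (p ⁻¹' {i})
  have hne {t r : V × Fin 2} (ht : t ∈ T) (hr : r ∉ T) : p t.1 ≠ p r.1 :=
    fun h => hr (h.symm.trans ht)
  refine gvol_le_of_induce_compl_eq hG hnn T (fun _ _ => zero_le_one) ?_ ?_ fun ψ => ?_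
  · ext a b
    have ha : p a.1.1 ≠ i := a.2
    simp [tensorK2On, ha]
  · intro t ht r hr
    rw [tensorK2On_adj_of_ne (hne ht hr), tensorK2On_adj_of_ne (hne ht hr)]
  set c : Fin 2 → Fin n → ℝ := fun ε ν =>
    ∏ r : ↥Tᶜ, if F.Adj i (p r.1.1) ∧ ε = r.1.2 then G ν (ψ r) else 1
  -- all vertices of the part have the same neighbours outside it
  have hc : (fun t ν => 1 * boundaryWeight G (tensorK2On H p s) T ψ t ν) = fun t => c t.1.2 := by
    funext t ν
    refine (one_mul _).trans (prod_congr rfl fun r _ => if_congr ?_ rfl rfl)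
    have ht : p t.1.1 = i := t.2
    rw [tensorK2On_adj_of_ne (hne t.2 r.2), hadj _ _ (hne t.2 r.2), ht]
  have hc_nonneg (ε : Fin 2) (ν : Fin n) : 0 ≤ c ε ν :=
    prod_nonneg fun _ _ => by split_ifs <;> simp [hnn]
  have hlayer :
      (fun q : ↥(p ⁻¹' {i}) × Fin 2 => if q.2 = 0 then c 0 else c 1) = fun q => c q.2 := by
    funext ⟨v, ε⟩
    fin_cases ε <;> rfl
  rw [hc, gvol_iso hG (inducePartIsoOfNotMem hi),
    gvol_iso hG (inducePartIsoOfMem (mem_insert_self i s)), gvol_boxProd_bot hG hnn]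
  exact (hcbs (c 0) (c 1) (hc_nonneg 0) (hc_nonneg 1)).trans_eq (congrArg _ hlayer)

/-- Let `G` be a weighted graph (symmetric with nonnegative entries).
If `H` is a blow-up of a bipartite graph `F` all of whose parts are weighted
cross-bipartite swapping in `G`, then `hom(H,G)² ≤ hom(H × K₂, G)`
(where `hom(H,G) = V_H(1,…,1;G)`). -/
theorem stmt13 {V ι : Type} [Fintype V] {n : ℕ} (H : SimpleGraph V) (F : SimpleGraph ι)
    (hF : F.Colorable 2)
    (G : Matrix (Fin n) (Fin n) ℝ) (hG : G.IsHermitian) (hnn : ∀ i j, 0 ≤ G i j)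
    (hblow : IsBlowUpOf H F fun α K => ∀ _ : Fintype α, WeightedCBS K G hG) :
    gvol H G hG (fun _ _ => 1) ^ 2 ≤ gvol (tensorK2 H) G hG (fun _ _ => 1) := by
  obtain ⟨p, -, hadj, hcbs⟩ := hblow
  obtain ⟨C⟩ := hF
  have hmono (s : Finset ι) : gvol (tensorK2On H p ∅) G hG (fun _ _ => 1) ≤
      gvol (tensorK2On H p s) G hG (fun _ _ => 1) := by
    induction s using Finset.induction_on with
    | empty => exact le_rfl
    | insert i s hi ih => exact ih.trans (gvol_tensorK2On_le_insert hG hnn hadj hi (hcbs i _))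
  calc gvol H G hG (fun _ _ => 1) ^ 2 = gvol (tensorK2On H p ∅) G hG (fun _ _ => 1) := by
        rw [tensorK2On_empty, gvol_boxProd_bot hG hnn, sq]
    _ ≤ gvol (tensorK2On H p (univ.image p)) G hG (fun _ _ => 1) := hmono _
    _ = gvol (tensorK2 H) G hG (fun _ _ => 1) :=
        gvol_iso hG (tensorK2IsoTensorK2On hadj C fun v => mem_image_of_mem p (mem_univ v)) _
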